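/- If f : X → Y is a closed homologically UV^0(G) surjection between paracompact spaces, then Y is lc^0_G. -/

import Mathlib

/-!
Given `y ∈ Y` and a neighbourhood `U` of `y`, the fibre `f⁻¹(y)` has a neighbourhood
`V' ⊆ f⁻¹(U)` whose reduced `0`-cycles bound in `f⁻¹(U)`. Since `f` is closed, some
neighbourhood `V` of `y` satisfies `f⁻¹(V) ⊆ V'`. A `0`-cycle in `V` lifts, vertex by vertex
through the surjection `f`, to a `0`-cycle in `V'` with the same augmentation; the `1`-chain it
bounds in `f⁻¹(U)` is pushed forward by `f` to a `1`-chain in `U` bounding the original cycle.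
-/

noncomputable section
open Set
universe u v w w'

namespace SimplexCategory

/-- The old `SimplexCategory.toTopObj` (removed from Mathlib): the topological simplex
as the set of functions `x → ℝ≥0` with sum `1`. -/
def toTopObj (x : SimplexCategory) : Set (Fin (x.len + 1) → NNReal) :=
  { f | ∑ i, f i = 1 }

/-- The old `SimplexCategory.toTopMap` (removed from Mathlib). -/
def toTopMap {x y : SimplexCategory} (f : x ⟶ y) (g : x.toTopObj) : y.toTopObj :=
  ⟨fun i => ∑ j ∈ Finset.univ.filter (fun j => f.toOrderHom j = i), g.1 j, by
    change (∑ i, ∑ j ∈ Finset.univ.filter (fun j => f.toOrderHom j = i), g.1 j) = 1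
    rw [Finset.sum_fiberwise]
    exact g.2⟩

theorem continuous_toTopMap {x y : SimplexCategory} (f : x ⟶ y) :
    Continuous (toTopMap f) := by
  refine Continuous.subtype_mk (continuous_pi fun i => ?_) _
  exact continuous_finset_sum _ (fun j _ => (continuous_apply _).comp continuous_subtype_val)

end SimplexCategory

/-- The topological standard `k`-simplex. -/
abbrev TDelta (k : ℕ) := (SimplexCategory.mk k).toTopObj

/-- A singular `k`-simplex in `X`. -/
abbrev SSimplex (X : Type u) [TopologicalSpace X] (k : ℕ) := C(TDelta k, X)

/-- Singular `k`-chains of `X` with coefficients in `G`. -/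
abbrev SChain (X : Type u) [TopologicalSpace X] (G : Type v) [Zero G] (k : ℕ) :=
  SSimplex X k →₀ G

variable {X : Type u} [TopologicalSpace X]

/-- The `i`-th face of a singular `(k+1)`-simplex. -/
def SSimplex.face {k : ℕ} (σ : SSimplex X (k + 1)) (i : Fin (k + 2)) : SSimplex X k :=
  σ.comp ⟨SimplexCategory.toTopMap (SimplexCategory.δ i),
    SimplexCategory.continuous_toTopMap _⟩

/-- `τ` is a face of `σ` (a restriction of `σ` to a face of the standard simplex). -/
def IsFaceOf {m k : ℕ} (τ : SSimplex X m) (σ : SSimplex X k) : Prop :=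
  ∃ f : SimplexCategory.mk m ⟶ SimplexCategory.mk k,
    Function.Injective f.toOrderHom ∧
    τ = σ.comp ⟨SimplexCategory.toTopMap f, SimplexCategory.continuous_toTopMap f⟩

theorem isFaceOf_face {k : ℕ} (σ : SSimplex X (k + 1)) (i : Fin (k + 2)) :
    IsFaceOf (σ.face i) σ :=
  ⟨SimplexCategory.δ i, Fin.succAbove_right_injective, rfl⟩

theorem IsFaceOf.dim_le {m k : ℕ} {τ : SSimplex X m} {σ : SSimplex X k}
    (h : IsFaceOf τ σ) : m ≤ k := by
  obtain ⟨f, hf, -⟩ := h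
  have := Fintype.card_le_of_injective _ hf
  simpa using this

theorem IsFaceOf.range_subset {m k : ℕ} {τ : SSimplex X m} {σ : SSimplex X k}
    (h : IsFaceOf τ σ) : Set.range τ ⊆ Set.range σ := by
  obtain ⟨f, -, rfl⟩ := h
  rintro x ⟨y, rfl⟩
  exact ⟨_, rfl⟩

/-- The boundary operator on singular chains. -/
def SBoundary (X : Type u) [TopologicalSpace X] (G : Type v) [AddCommGroup G] (k : ℕ) :
    SChain X G (k + 1) →+ SChain X G k :=
  Finsupp.liftAddHom fun σ =>
    ∑ i : Fin (k + 2), ((-1 : ℤ) ^ (i : ℕ)) • Finsupp.singleAddHom (σ.face i)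

/-- The augmentation on singular `0`-chains. -/
def SAug (X : Type u) [TopologicalSpace X] (G : Type v) [AddCommGroup G] :
    SChain X G 0 →+ G :=
  Finsupp.liftAddHom fun _ => AddMonoidHom.id G

/-- The carrier `|c|` of a singular chain: the union of the images of the singular
simplexes appearing in its irreducible representation. -/
def SCarrier {G : Type v} [Zero G] {k : ℕ} (c : SChain X G k) : Set X :=
  ⋃ σ ∈ c.support, Set.range σ

/-- A cycle of the singular chain complex, reduced in dimension `0`. -/
def IsCycle (X : Type u) [TopologicalSpace X] (G : Type v) [AddCommGroup G] :
    ∀ {k : ℕ}, SChain X G k → Prop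
  | 0, c => SAug X G c = 0
  | (k + 1), c => SBoundary X G k c = 0

/-- The vertices of a singular chain: all `0`-dimensional faces of the simplexes in its
irreducible representation. -/
def chainVertices {G : Type v} [Zero G] {k : ℕ} (c : SChain X G k) : Set (SSimplex X 0) :=
  {v | ∃ σ ∈ c.support, IsFaceOf v σ}

/-- The point `z` viewed as a singular `0`-simplex. -/
def ptSimplex {Z : Type w} [TopologicalSpace Z] (z : Z) : SSimplex Z 0 :=
  ContinuousMap.const _ z

/-- Every `k`-cycle (`k ≤ n`, reduced in dimension `0`) of `S(V;G)` bounds in `S(U;G)`;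
this expresses that the inclusion `V ↪ U` induces trivial homomorphisms
`H_k(V;G) → H_k(U;G)` for all `k ≤ n` (homology reduced in dimension `0`). -/
def HomTrivialPair (G : Type v) [AddCommGroup G] {X : Type u} [TopologicalSpace X]
    (V U : Set X) (n : ℕ) : Prop :=
  ∀ k ≤ n, ∀ c : SChain X G k, SCarrier c ⊆ V → IsCycle X G c →
    ∃ b : SChain X G (k + 1), SCarrier b ⊆ U ∧ SBoundary X G k b = c

/-- `A` is a homologically `UV^n(G)` subset of `X`. -/
def IsUVSet (G : Type v) [AddCommGroup G] {X : Type u} [TopologicalSpace X]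
    (n : ℕ) (A : Set X) : Prop :=
  ∀ U ∈ nhdsSet A, ∃ V ∈ nhdsSet A, V ⊆ U ∧ HomTrivialPair G V U n

/-- `f` is a closed homologically `UV^n(G)` surjection. -/
def IsUVMap (G : Type v) [AddCommGroup G] {X : Type u} {Y : Type w}
    [TopologicalSpace X] [TopologicalSpace Y] (n : ℕ) (f : X → Y) : Prop :=
  Continuous f ∧ IsClosedMap f ∧ Function.Surjective f ∧
    ∀ y : Y, IsUVSet G n (f ⁻¹' {y})

/-- `X` is homologically locally connected in dimension `n` with respect to `G`
(`X` is `lc^n_G`). -/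
def IsLC (G : Type v) [AddCommGroup G] (X : Type u) [TopologicalSpace X] (n : ℕ) : Prop :=
  ∀ x : X, ∀ U ∈ nhds x, ∃ V ∈ nhds x, V ⊆ U ∧ HomTrivialPair G V U n

/-- An open cover of (all of) `X`. -/
def IsOpenCover {X : Type u} [TopologicalSpace X] (𝒰 : Set (Set X)) : Prop :=
  (∀ U ∈ 𝒰, IsOpen U) ∧ ⋃₀ 𝒰 = Set.univ

/-- An open cover of the subset `W` of `X`. -/
def IsOpenCoverOn {X : Type u} [TopologicalSpace X] (𝒰 : Set (Set X)) (W : Set X) : Prop :=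
  (∀ U ∈ 𝒰, IsOpen U) ∧ ⋃₀ 𝒰 = W

/-- `𝒱` refines `𝒰`. -/
def Refines {X : Type u} (𝒱 𝒰 : Set (Set X)) : Prop := ∀ V ∈ 𝒱, ∃ U ∈ 𝒰, V ⊆ U

/-- The cover `f⁻¹(𝒰)`. -/
def preCover {X : Type u} {Y : Type w} (f : X → Y) (𝒰 : Set (Set Y)) : Set (Set X) :=
  (fun U => f ⁻¹' U) '' 𝒰

/-- Covering dimension of `X` is at most `n`: every open cover admits an open refinement
covering `X` in which no `n + 2` distinct members have a common point. -/
def CovDimLE (X : Type u) [TopologicalSpace X] (n : ℕ) : Prop :=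
  ∀ 𝒰 : Set (Set X), IsOpenCover 𝒰 → ∃ 𝒱 : Set (Set X), IsOpenCover 𝒱 ∧ Refines 𝒱 𝒰 ∧
    ∀ S : Finset (Set X), ↑S ⊆ 𝒱 → (⋂₀ (S : Set (Set X))).Nonempty → S.card ≤ n + 1
/-- A subcomplex of the singular chain complex of `Z`: a face-closed family of
singular simplexes. -/
structure SingSub (Z : Type w) [TopologicalSpace Z] where
  mem : ∀ k, Set (SSimplex Z k)
  face_mem : ∀ {m k : ℕ} {τ : SSimplex Z m} {σ : SSimplex Z k},
    IsFaceOf τ σ → σ ∈ mem k → τ ∈ mem m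

variable {Z : Type w} [TopologicalSpace Z]

/-- The full singular chain complex `S(Z;G)` viewed as a subcomplex of itself. -/
def fullSub (Z : Type w) [TopologicalSpace Z] : SingSub Z :=
  ⟨fun _ => Set.univ, fun _ _ => trivial⟩

/-- The subcomplex `S(A;G)` of simplexes with carrier inside `A`. -/
def setSub (A : Set Z) : SingSub Z :=
  ⟨fun _ => {σ | Set.range σ ⊆ A}, fun h hσ => (h.range_subset).trans hσ⟩

/-- The subcomplex `S(W,ω;G)` generated by simplexes whose carrier lies in some member
of `ω`. -/
def coverSub (ω : Set (Set Z)) : SingSub Z :=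
  ⟨fun _ => {σ | ∃ O ∈ ω, Set.range σ ⊆ O},
    fun h hσ => by obtain ⟨O, hO, hsub⟩ := hσ; exact ⟨O, hO, h.range_subset.trans hsub⟩⟩

/-- The `n`-dimensional part `S^{(n)}` of a subcomplex. -/
def truncSub (T : SingSub Z) (n : ℕ) : SingSub Z :=
  ⟨fun k => {σ | σ ∈ T.mem k ∧ k ≤ n},
    fun h hσ => ⟨T.face_mem h hσ.1, le_trans h.dim_le hσ.2⟩⟩

/-- Intersection of two subcomplexes. -/
def interSub (T T' : SingSub Z) : SingSub Z :=
  ⟨fun k => T.mem k ∩ T'.mem k,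
    fun h hσ => ⟨T.face_mem h hσ.1, T'.face_mem h hσ.2⟩⟩

/-- `T ≤ T'` for subcomplexes. -/
def SingSub.le (T T' : SingSub Z) : Prop := ∀ k, T.mem k ⊆ T'.mem k

/-- The `G`-module of `k`-chains of the subcomplex `T`, as a submodule of `S_k(Z;G)`. -/
def SingSub.sub (T : SingSub Z) (G : Type v) [CommRing G] (k : ℕ) :
    Submodule G (SChain Z G k) where
  carrier := {c | ∀ σ ∈ c.support, σ ∈ T.mem k}
  add_mem' := by
    classical
    intro a b ha hb σ hσ
    rcases Finset.mem_union.1 (Finsupp.support_add hσ) with h | h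
    exacts [ha σ h, hb σ h]
  zero_mem' := by simp
  smul_mem' := by
    intro g c hc σ hσ
    exact hc σ (Finsupp.support_smul hσ)

theorem SingSub.mem_sub {T : SingSub Z} {G : Type v} [CommRing G] {k : ℕ}
    {c : SChain Z G k} : c ∈ T.sub G k ↔ ∀ σ ∈ c.support, σ ∈ T.mem k := Iff.rfl

theorem SingSub.sub_le {T T' : SingSub Z} (h : T.le T') (G : Type v) [CommRing G] (k : ℕ) :
    T.sub G k ≤ T'.sub G k := fun _c hc => fun σ hσ => h k (hc σ hσ)

theorem SingSub.mem_full {G : Type v} [CommRing G] {k : ℕ} (c : SChain Z G k) :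
    c ∈ (fullSub Z).sub G k := fun _ _ => trivial

theorem SingSub.single_mem (T : SingSub Z) {G : Type v} [CommRing G] {k : ℕ}
    {σ : SSimplex Z k} (h : σ ∈ T.mem k) (g : G) : Finsupp.single σ g ∈ T.sub G k := by
  rw [SingSub.mem_sub]
  intro τ hτ
  have h1 : τ ∈ ({σ} : Finset (SSimplex Z k)) := Finsupp.support_single_subset hτ
  rw [Finset.mem_singleton] at h1
  subst h1; exact h

/-- The generator of `T.sub G k` given by a single simplex with coefficient `1`. -/
def SingSub.gen (T : SingSub Z) (G : Type v) [CommRing G] {k : ℕ}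
    (σ : SSimplex Z k) (h : σ ∈ T.mem k) : T.sub G k :=
  ⟨Finsupp.single σ 1, T.single_mem h 1⟩


theorem SingSub.boundary_mem (T : SingSub Z) {G : Type v} [CommRing G] {k : ℕ}
    {c : SChain Z G (k + 1)} (hc : c ∈ T.sub G (k + 1)) :
    SBoundary Z G k c ∈ T.sub G k := by
  classical
  rw [SingSub.mem_sub] at hc ⊢
  intro τ hτ
  rw [SBoundary, Finsupp.liftAddHom_apply] at hτ
  have h1 := Finsupp.support_sum hτ
  rw [Finset.mem_biUnion] at h1
  obtain ⟨σ, hσ, hτ2⟩ := h1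
  rw [AddMonoidHom.finset_sum_apply] at hτ2
  have h2 := Finsupp.support_finset_sum (s := (Finset.univ : Finset (Fin (k + 2))))
    (f := fun i : Fin (k + 2) =>
      ((((-1 : ℤ) ^ (i : ℕ)) • Finsupp.singleAddHom (σ.face i)) (c σ))) hτ2
  rw [Finset.mem_biUnion] at h2
  obtain ⟨i, -, hi⟩ := h2
  simp only [AddMonoidHom.smul_apply] at hi
  have h5 := Finsupp.support_smul hi
  have h4 : τ ∈ ({σ.face i} : Finset (SSimplex Z k)) := Finsupp.support_single_subset h5
  rw [Finset.mem_singleton] at h4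
  subst h4
  exact T.face_mem (isFaceOf_face σ i) (hc σ hσ)

section ChainMaps

variable {G : Type v} [CommRing G]

/-- A chain morphism from the subcomplex `T` of `S(Z;G)` to `S(X;G)`: a family of
`G`-homomorphisms commuting with the boundary operators and the augmentations. -/
structure SingChainMap (G : Type v) [CommRing G] {Z : Type w} [TopologicalSpace Z]
    (T : SingSub Z) (X : Type u) [TopologicalSpace X] where
  map : ∀ k, T.sub G k →ₗ[G] SChain X G k
  comm : ∀ (k : ℕ) (c : T.sub G (k + 1)),
    map k ⟨SBoundary Z G k c, T.boundary_mem c.2⟩ = SBoundary X G k (map (k + 1) c)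
  aug : ∀ c : T.sub G 0, SAug X G (map 0 c) = SAug Z G c

variable {Z : Type w} [TopologicalSpace Z] {T : SingSub Z} {X : Type u} [TopologicalSpace X]

/-- The value of a chain morphism on a single simplex of the subcomplex. -/
def SingChainMap.val (φ : SingChainMap G T X) (m : ℕ) (σ : SSimplex Z m)
    (h : σ ∈ T.mem m) : SChain X G m :=
  φ.map m (T.gen G σ h)

/-- Restriction of a chain morphism to a smaller subcomplex. -/
def SingChainMap.restrict (φ : SingChainMap G T X) {T' : SingSub Z} (h : T'.le T) :
    SingChainMap G T' X where
  map k := (φ.map k).comp (Submodule.inclusion (SingSub.sub_le h G k))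
  comm k c := φ.comm k (Submodule.inclusion (SingSub.sub_le h G (k + 1)) c)
  aug c := φ.aug (Submodule.inclusion (SingSub.sub_le h G 0) c)

/-- `φ'` (defined on the larger subcomplex) extends `φ`. -/
def SingChainMap.ExtendsMap {T' : SingSub Z} (h : T'.le T)
    (φbig : SingChainMap G T X) (φ : SingChainMap G T' X) : Prop :=
  ∀ (k : ℕ) (c : SChain Z G k) (hc : c ∈ T'.sub G k),
    φbig.map k ⟨c, SingSub.sub_le h G k hc⟩ = φ.map k ⟨c, hc⟩

end ChainMaps

section ValPredicates

variable {G : Type v} [Zero G] {Z : Type w} [TopologicalSpace Z]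
  {X : Type u} [TopologicalSpace X]

/-- Two families of values on the simplexes of `T` are `𝒰`-close. -/
def ValsClose (T : SingSub Z)
    (F₁ F₂ : ∀ (m : ℕ) (σ : SSimplex Z m), σ ∈ T.mem m → SChain X G m)
    (𝒰 : Set (Set X)) : Prop :=
  ∀ (k : ℕ) (σ : SSimplex Z k), σ ∈ T.mem k → ∃ U ∈ 𝒰,
    ∀ (m : ℕ) (τ : SSimplex Z m), IsFaceOf τ σ → ∀ hτ : τ ∈ T.mem m,
      SCarrier (F₁ m τ hτ) ∪ SCarrier (F₂ m τ hτ) ⊆ U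

/-- A family of values on the simplexes of `T` is `𝒰`-small. -/
def ValsSmall (T : SingSub Z)
    (F : ∀ (m : ℕ) (σ : SSimplex Z m), σ ∈ T.mem m → SChain X G m)
    (𝒰 : Set (Set X)) : Prop :=
  ∀ (k : ℕ) (σ : SSimplex Z k), σ ∈ T.mem k → ∃ U ∈ 𝒰,
    ∀ (m : ℕ) (τ : SSimplex Z m), IsFaceOf τ σ → ∀ hτ : τ ∈ T.mem m,
      SCarrier (F m τ hτ) ⊆ U

/-- A family of values on the simplexes of `T` is correct: each singular `0`-simplex is
sent to a singular `0`-simplex. -/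
def ValsCorrect [One G] (T : SingSub Z)
    (F : ∀ (m : ℕ) (σ : SSimplex Z m), σ ∈ T.mem m → SChain X G m) : Prop :=
  ∀ (σ : SSimplex Z 0) (hσ : σ ∈ T.mem 0), ∃ τ : SSimplex X 0,
    F 0 σ hσ = Finsupp.single τ 1

end ValPredicates

section MoreChainMaps

variable {G : Type v} [CommRing G] {Z : Type w} [TopologicalSpace Z] {T : SingSub Z}
  {X : Type u} [TopologicalSpace X]

/-- A chain morphism is continuous. -/
def SingChainMap.IsCont (φ : SingChainMap G T X) : Prop :=
  ∀ (z : Z) (hz : ptSimplex z ∈ T.mem 0) (U : Set X), IsOpen U →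
    SCarrier (φ.val 0 (ptSimplex z) hz) ⊆ U →
    ∃ V ∈ nhds z, ∀ z' ∈ V, ∀ hz' : ptSimplex z' ∈ T.mem 0,
      SCarrier (φ.val 0 (ptSimplex z') hz') ⊆ U

/-- A chain homotopy `D` between two chain morphisms `φ` and `ψ`. -/
structure SingChainHtpy {G : Type v} [CommRing G] {Z : Type w} [TopologicalSpace Z]
    {T : SingSub Z} {X : Type u} [TopologicalSpace X] (φ ψ : SingChainMap G T X) where
  map : ∀ k, T.sub G k →ₗ[G] SChain X G (k + 1)
  zero : ∀ c : T.sub G 0, SBoundary X G 0 (map 0 c) = φ.map 0 c - ψ.map 0 c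
  succ : ∀ (k : ℕ) (c : T.sub G (k + 1)),
    SBoundary X G (k + 1) (map (k + 1) c) =
      φ.map (k + 1) c - ψ.map (k + 1) c - map k ⟨SBoundary Z G k c, T.boundary_mem c.2⟩

/-- The chain homotopy `D` is `𝒰`-small. -/
def SingChainHtpy.Small {φ ψ : SingChainMap G T X} (D : SingChainHtpy φ ψ)
    (𝒰 : Set (Set X)) : Prop :=
  ∀ (k : ℕ) (σ : SSimplex Z k), σ ∈ T.mem k → ∃ U ∈ 𝒰,
    (∀ (m : ℕ) (τ : SSimplex Z m), IsFaceOf τ σ → ∀ hτ : τ ∈ T.mem m,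
      SCarrier (D.map m (T.gen G τ hτ)) ⊆ U) ∧
    (∀ v : SSimplex Z 0, IsFaceOf v σ → ∀ hv : v ∈ T.mem 0,
      SCarrier (φ.val 0 v hv) ∪ SCarrier (ψ.val 0 v hv) ⊆ U)

end MoreChainMaps

/-- The pushforward of a singular simplex along a continuous map. -/
def pushSimplex {X : Type u} {Y : Type w} [TopologicalSpace X] [TopologicalSpace Y]
    (f : C(X, Y)) {k : ℕ} (σ : SSimplex X k) : SSimplex Y k :=
  f.comp σ

/-- The chain morphism `f_♯` induced by a continuous map `f`. -/
def pushChain {X : Type u} {Y : Type w} [TopologicalSpace X] [TopologicalSpace Y]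
    (f : C(X, Y)) (G : Type v) [AddCommGroup G] (k : ℕ) :
    SChain X G k →+ SChain Y G k :=
  Finsupp.mapDomain.addMonoidHom (pushSimplex f)

section Simplicial

/-- An abstract simplicial complex on the vertex set `V`. -/
structure AbsComplex (V : Type w') where
  faces : Set (Finset V)
  nonempty_of_mem : ∀ s ∈ faces, s.Nonempty
  down_closed : ∀ s ∈ faces, ∀ t ⊆ s, t.Nonempty → t ∈ faces

/-- `K` has dimension at most `n`. -/
def AbsComplex.DimLE {V : Type w'} (K : AbsComplex V) (n : ℕ) : Prop :=
  ∀ s ∈ K.faces, s.card ≤ n + 1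

/-- Oriented simplicial `k`-chains on the vertex set `V` with coefficients in `G`
(with orientations induced by the linear order on `V`). -/
abbrev SimpChain (V : Type w') (G : Type v) [Zero G] (k : ℕ) :=
  {s : Finset V // s.card = k + 1} →₀ G

variable {V : Type w'} [LinearOrder V]

/-- The `i`-th face of a `(k+1)`-dimensional simplex. -/
def simpFace {k : ℕ} (s : {s : Finset V // s.card = k + 2}) (i : Fin (k + 2)) :
    {s : Finset V // s.card = k + 1} :=
  ⟨s.1.erase (s.1.orderIsoOfFin s.2 i), by
    rw [Finset.card_erase_of_mem (s.1.orderIsoOfFin s.2 i).2, s.2]; omega⟩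

/-- The boundary operator of the oriented chain complex `C(·;G)` on vertex set `V`. -/
def simpBoundary (V : Type w') [LinearOrder V] (G : Type v) [AddCommGroup G] (k : ℕ) :
    SimpChain V G (k + 1) →+ SimpChain V G k :=
  Finsupp.liftAddHom fun s =>
    ∑ i : Fin (k + 2), ((-1 : ℤ) ^ (i : ℕ)) • Finsupp.singleAddHom (simpFace s i)

/-- The augmentation of the oriented chain complex. -/
def simpAug (V : Type w') (G : Type v) [AddCommGroup G] : SimpChain V G 0 →+ G :=
  Finsupp.liftAddHom fun _ => AddMonoidHom.id G

/-- The `G`-module of `k`-chains of `C(K;G)`, as a submodule of the `k`-chains on `V`. -/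
def AbsComplex.sub (K : AbsComplex V) (G : Type v) [CommRing G] (k : ℕ) :
    Submodule G (SimpChain V G k) where
  carrier := {c | ∀ s ∈ c.support, s.1 ∈ K.faces}
  add_mem' := by
    classical
    intro a b ha hb s hs
    rcases Finset.mem_union.1 (Finsupp.support_add hs) with h | h
    exacts [ha s h, hb s h]
  zero_mem' := by simp
  smul_mem' := by
    intro g c hc s hs
    exact hc s (Finsupp.support_smul hs)

theorem AbsComplex.mem_sub {K : AbsComplex V} {G : Type v} [CommRing G] {k : ℕ}
    {c : SimpChain V G k} : c ∈ K.sub G k ↔ ∀ s ∈ c.support, s.1 ∈ K.faces := Iff.rfl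

theorem AbsComplex.sub_le {K L : AbsComplex V} (h : L.faces ⊆ K.faces)
    (G : Type v) [CommRing G] (k : ℕ) : L.sub G k ≤ K.sub G k :=
  fun _c hc => fun s hs => h (hc s hs)

theorem AbsComplex.single_mem (K : AbsComplex V) {G : Type v} [CommRing G] {k : ℕ}
    {s : {s : Finset V // s.card = k + 1}} (h : s.1 ∈ K.faces) (g : G) :
    Finsupp.single s g ∈ K.sub G k := by
  rw [AbsComplex.mem_sub]
  intro t ht
  have h1 : t ∈ ({s} : Finset {s : Finset V // s.card = k + 1}) :=
    Finsupp.support_single_subset ht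
  rw [Finset.mem_singleton] at h1
  subst h1; exact h

/-- The generator of `K.sub G k` given by a single simplex with coefficient `1`. -/
def AbsComplex.gen (K : AbsComplex V) (G : Type v) [CommRing G] {k : ℕ}
    (s : Finset V) (hcard : s.card = k + 1) (h : s ∈ K.faces) : K.sub G k :=
  ⟨Finsupp.single ⟨s, hcard⟩ 1, K.single_mem h 1⟩

theorem AbsComplex.boundary_mem (K : AbsComplex V) {G : Type v} [CommRing G] {k : ℕ}
    {c : SimpChain V G (k + 1)} (hc : c ∈ K.sub G (k + 1)) :
    simpBoundary V G k c ∈ K.sub G k := by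
  classical
  rw [AbsComplex.mem_sub] at hc ⊢
  intro t ht
  rw [simpBoundary, Finsupp.liftAddHom_apply] at ht
  have h1 := Finsupp.support_sum ht
  rw [Finset.mem_biUnion] at h1
  obtain ⟨s, hs, ht2⟩ := h1
  rw [AddMonoidHom.finset_sum_apply] at ht2
  have h2 := Finsupp.support_finset_sum (s := (Finset.univ : Finset (Fin (k + 2))))
    (f := fun i : Fin (k + 2) =>
      ((((-1 : ℤ) ^ (i : ℕ)) • Finsupp.singleAddHom (simpFace s i)) (c s))) ht2
  rw [Finset.mem_biUnion] at h2
  obtain ⟨i, -, hi⟩ := h2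
  simp only [AddMonoidHom.smul_apply] at hi
  have h5 := Finsupp.support_smul hi
  have h4 : t ∈ ({simpFace s i} : Finset {s : Finset V // s.card = k + 1}) :=
    Finsupp.support_single_subset h5
  rw [Finset.mem_singleton] at h4
  subst h4
  refine K.down_closed s.1 (hc s hs) _ (Finset.erase_subset _ _) ?_
  rw [← Finset.card_pos, (simpFace s i).2]
  exact Nat.succ_pos k

section SimpMaps

variable {G : Type v} [CommRing G] {V : Type w'} [LinearOrder V]
  {X : Type u} [TopologicalSpace X]

/-- A chain morphism from the oriented chain complex `C(K;G)` to `S(X;G)`. -/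
structure SimpToSing (G : Type v) [CommRing G] {V : Type w'} [LinearOrder V]
    (K : AbsComplex V) (X : Type u) [TopologicalSpace X] where
  map : ∀ k, K.sub G k →ₗ[G] SChain X G k
  comm : ∀ (k : ℕ) (c : K.sub G (k + 1)),
    map k ⟨simpBoundary V G k c, K.boundary_mem c.2⟩ = SBoundary X G k (map (k + 1) c)
  aug : ∀ c : K.sub G 0, SAug X G (map 0 c) = simpAug V G c

/-- The value of such a chain morphism on a single simplex of `K`. -/
def SimpToSing.val {K : AbsComplex V} (φ : SimpToSing G K X) (m : ℕ) (s : Finset V)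
    (hcard : s.card = m + 1) (h : s ∈ K.faces) : SChain X G m :=
  φ.map m (K.gen G s hcard h)

/-- Restriction of such a chain morphism to a subcomplex. -/
def SimpToSing.restrict {K : AbsComplex V} (φ : SimpToSing G K X) {L : AbsComplex V}
    (h : L.faces ⊆ K.faces) : SimpToSing G L X where
  map k := (φ.map k).comp (Submodule.inclusion (AbsComplex.sub_le h G k))
  comm k c := φ.comm k (Submodule.inclusion (AbsComplex.sub_le h G (k + 1)) c)
  aug c := φ.aug (Submodule.inclusion (AbsComplex.sub_le h G 0) c)

/-- `φbig` (defined on `K`) extends `φ` (defined on the subcomplex `L`). -/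
def SimpToSing.ExtendsMap {K L : AbsComplex V} (h : L.faces ⊆ K.faces)
    (φbig : SimpToSing G K X) (φ : SimpToSing G L X) : Prop :=
  ∀ (k : ℕ) (c : SimpChain V G k) (hc : c ∈ L.sub G k),
    φbig.map k ⟨c, AbsComplex.sub_le h G k hc⟩ = φ.map k ⟨c, hc⟩

/-- Two families of values on the simplexes of `K` are `𝒰`-close. -/
def SimpValsClose (K : AbsComplex V)
    (F₁ F₂ : ∀ (m : ℕ) (s : Finset V), s.card = m + 1 → s ∈ K.faces → SChain X G m)
    (𝒰 : Set (Set X)) : Prop :=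
  ∀ (k : ℕ) (s : Finset V) (_hs : s.card = k + 1), s ∈ K.faces → ∃ U ∈ 𝒰,
    ∀ (m : ℕ) (t : Finset V) (ht : t.card = m + 1), t ⊆ s → ∀ htK : t ∈ K.faces,
      SCarrier (F₁ m t ht htK) ∪ SCarrier (F₂ m t ht htK) ⊆ U

/-- A family of values on the simplexes of `K` is `𝒰`-small. -/
def SimpValsSmall (K : AbsComplex V)
    (F : ∀ (m : ℕ) (s : Finset V), s.card = m + 1 → s ∈ K.faces → SChain X G m)
    (𝒰 : Set (Set X)) : Prop :=
  ∀ (k : ℕ) (s : Finset V) (_hs : s.card = k + 1), s ∈ K.faces → ∃ U ∈ 𝒰,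
    ∀ (m : ℕ) (t : Finset V) (ht : t.card = m + 1), t ⊆ s → ∀ htK : t ∈ K.faces,
      SCarrier (F m t ht htK) ⊆ U

/-- A family of values is correct: every vertex is sent to a singular `0`-simplex. -/
def SimpValsCorrect (K : AbsComplex V)
    (F : ∀ (m : ℕ) (s : Finset V), s.card = m + 1 → s ∈ K.faces → SChain X G m) : Prop :=
  ∀ (s : Finset V) (hs : s.card = 0 + 1) (hK : s ∈ K.faces),
    ∃ τ : SSimplex X 0, F 0 s hs hK = Finsupp.single τ 1

/-- A chain morphism `φ : C(L;G) → S(X;G)` is a partial algebraic realization of `C(K;G)`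
in the open cover `𝒰` (where `L` is a subcomplex of `K`). -/
def IsPartialRealization {K L : AbsComplex V} (_hLK : L.faces ⊆ K.faces)
    (φ : SimpToSing G L X) (𝒰 : Set (Set X)) : Prop :=
  ∀ (k : ℕ) (s : Finset V) (_hs : s.card = k + 1), s ∈ K.faces → ∃ U ∈ 𝒰,
    ∀ (m : ℕ) (t : Finset V) (ht : t.card = m + 1), t ⊆ s → ∀ htL : t ∈ L.faces,
      SCarrier (φ.val m t ht htL) ⊆ U

/-- `L` contains all vertices of `K`. -/
def ContainsVertices {V : Type w'} (L K : AbsComplex V) : Prop :=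
  ∀ v : V, {v} ∈ K.faces → {v} ∈ L.faces

/-- A chain homotopy between two chain morphisms `C(K;G) → S(X;G)`. -/
structure SimpChainHtpy {K : AbsComplex V} (φ ψ : SimpToSing G K X) where
  map : ∀ k, K.sub G k →ₗ[G] SChain X G (k + 1)
  zero : ∀ c : K.sub G 0, SBoundary X G 0 (map 0 c) = φ.map 0 c - ψ.map 0 c
  succ : ∀ (k : ℕ) (c : K.sub G (k + 1)),
    SBoundary X G (k + 1) (map (k + 1) c) =
      φ.map (k + 1) c - ψ.map (k + 1) c - map k ⟨simpBoundary V G k c, K.boundary_mem c.2⟩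

/-- The chain homotopy is `𝒰`-small. -/
def SimpChainHtpy.Small {K : AbsComplex V} {φ ψ : SimpToSing G K X}
    (D : SimpChainHtpy φ ψ) (𝒰 : Set (Set X)) : Prop :=
  ∀ (k : ℕ) (s : Finset V) (_hs : s.card = k + 1), s ∈ K.faces → ∃ U ∈ 𝒰,
    (∀ (m : ℕ) (t : Finset V) (ht : t.card = m + 1), t ⊆ s → ∀ htK : t ∈ K.faces,
      SCarrier (D.map m (K.gen G t ht htK)) ⊆ U) ∧
    (∀ v : V, v ∈ s → ∀ hv : {v} ∈ K.faces,
      SCarrier (φ.val 0 {v} (Finset.card_singleton v) hv) ∪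
        SCarrier (ψ.val 0 {v} (Finset.card_singleton v) hv) ⊆ U)

/-- A chain morphism from a subcomplex `T` of `S(Y;G)` to the oriented chain complex
`C(K;G)`. -/
structure SingToSimp (G : Type v) [CommRing G] {Y : Type w} [TopologicalSpace Y]
    (T : SingSub Y) {V : Type w'} [LinearOrder V] (K : AbsComplex V) where
  map : ∀ k, T.sub G k →ₗ[G] SimpChain V G k
  mem : ∀ (k : ℕ) (c : T.sub G k), map k c ∈ K.sub G k
  comm : ∀ (k : ℕ) (c : T.sub G (k + 1)),
    map k ⟨SBoundary Y G k c, T.boundary_mem c.2⟩ = simpBoundary V G k (map (k + 1) c)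
  aug : ∀ c : T.sub G 0, simpAug V G (map 0 c) = SAug Y G c

end SimpMaps

open Topology

/-- `X` is an absolute neighborhood algebraic `G`-retract (an algebraic `ANR_G`):
every open cover `𝒰` has an open refinement `𝒱` such that every correct partial
algebraic realization of `C(K;G)` in `𝒱` extends to a full algebraic realization of
`C(K;G)` in `𝒰`. -/
def IsAlgANR (G : Type v) [CommRing G] (X : Type u) [MetricSpace X] : Prop :=
  ∀ 𝒰 : Set (Set X), IsOpenCover 𝒰 → ∃ 𝒱 : Set (Set X), IsOpenCover 𝒱 ∧ Refines 𝒱 𝒰 ∧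
    ∀ (V : Type w') (_ : LinearOrder V) (K L : AbsComplex V) (hLK : L.faces ⊆ K.faces),
      ContainsVertices L K → ∀ φ : SimpToSing G L X, SimpValsCorrect L φ.val →
        IsPartialRealization hLK φ 𝒱 →
        ∃ ψ : SimpToSing G K X, ψ.ExtendsMap hLK φ ∧ SimpValsSmall K ψ.val 𝒰

/-- `A` is a neighborhood algebraic `G`-retract of `M`: there are a neighborhood `U` of
`A`, an open cover `𝒰` of `U` and a chain morphism `μ : S(U,𝒰;G) → S(A;G)` which is the
identity on `S(A;G) ∩ S(U,𝒰;G)` and which is "continuous at `A`" in the sense of (ii). -/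
def IsNbhdAlgRetract (G : Type v) [CommRing G] {M : Type u} [TopologicalSpace M]
    (A : Set M) : Prop :=
  ∃ U : Set M, IsOpen U ∧ A ⊆ U ∧ ∃ 𝒰 : Set (Set M), IsOpenCoverOn 𝒰 U ∧
    ∃ μ : SingChainMap G (coverSub 𝒰) M,
      (∀ (k : ℕ) (c : SChain M G k) (hc : c ∈ (coverSub 𝒰).sub G k),
        SCarrier (μ.map k ⟨c, hc⟩) ⊆ A) ∧
      (∀ (k : ℕ) (c : SChain M G k) (hc : c ∈ (coverSub 𝒰).sub G k),
        c ∈ (setSub A).sub G k → μ.map k ⟨c, hc⟩ = c) ∧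
      (∀ x ∈ A, ∀ Vx ∈ nhdsWithin x A, ∃ Wx ∈ nhds x, Wx ⊆ U ∧
        ∀ (k : ℕ) (c : SChain M G k) (hc : c ∈ (coverSub 𝒰).sub G k),
          SCarrier c ⊆ Wx → SCarrier (μ.map k ⟨c, hc⟩) ⊆ Vx)

/-- `X` is a (metric) absolute neighborhood retract: whenever `X` is embedded as a closed
subset of a metric space `M`, some neighborhood of it retracts onto it. -/
def IsMetricANR (X : Type u) [MetricSpace X] : Prop :=
  ∀ (M : Type max u w) (_ : MetricSpace M) (e : X → M), IsClosedEmbedding e →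
    ∃ W : Set M, IsOpen W ∧ Set.range e ⊆ W ∧
      ∃ r : W → M, Continuous r ∧ (∀ w : W, r w ∈ Set.range e) ∧
        ∀ (x : X) (h : e x ∈ W), r ⟨e x, h⟩ = e x

/-- `X` is an approximate absolute neighborhood `G`-retract (an `AANR_G`). -/
def IsAANR (G : Type v) [CommRing G] (X : Type u) [MetricSpace X] : Prop :=
  ∀ (Y : Type max u w) (_ : MetricSpace Y) (e : X → Y), IsClosedEmbedding e →
    ∀ 𝒰 : Set (Set X), IsOpenCover 𝒰 →
      ∃ W : Set Y, IsOpen W ∧ Set.range e ⊆ W ∧ ∃ α : Set (Set Y), IsOpenCoverOn α W ∧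
        ∃ φ : SingChainMap G (coverSub α) Y,
          (∀ (k : ℕ) (c : SChain Y G k) (hc : c ∈ (coverSub α).sub G k),
            SCarrier (φ.map k ⟨c, hc⟩) ⊆ Set.range e) ∧
          ValsClose (interSub (setSub (Set.range e)) (coverSub α))
            (fun m σ h => φ.map m ((coverSub α).gen G σ h.2))
            (fun _m σ _ => Finsupp.single σ 1)
            ((fun (U : Set X) => e '' U) '' 𝒰)

/-- `Y` has the approximate `lc^n_G`-property. -/
def ApproxLC (G : Type v) [AddCommGroup G] (Y : Type u) [TopologicalSpace Y] (n : ℕ) : Prop :=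
  ∀ y : Y, ∀ U ∈ nhds y, ∃ V ∈ nhds y, ∃ W ∈ nhds y, V ⊆ W ∧
    ∀ k ≤ n, ∀ c : SChain Y G k, SCarrier c ⊆ V → IsCycle Y G c →
      ∃ c' : SChain Y G k, SCarrier c' ⊆ W ∧ IsCycle Y G c' ∧
        chainVertices c' = chainVertices c ∧
        ∃ b : SChain Y G (k + 1), SCarrier b ⊆ U ∧ SBoundary Y G k b = c'

theorem setSub_le_full {Z : Type w} [TopologicalSpace Z] (A : Set Z) :
    (setSub A).le (fullSub Z) := fun _ _ _ => trivial

theorem truncSetSub_le_truncFull {Z : Type w} [TopologicalSpace Z] (A : Set Z) (n : ℕ) :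
    (truncSub (setSub A) n).le (truncSub (fullSub Z) n) :=
  fun _k _σ h => ⟨trivial, h.2⟩

theorem interSub_le_left {Z : Type w} [TopologicalSpace Z] (T T' : SingSub Z) :
    (interSub T T').le T := fun _k _σ h => h.1

theorem interSub_le_right {Z : Type w} [TopologicalSpace Z] (T T' : SingSub Z) :
    (interSub T T').le T' := fun _k _σ h => h.2

/-- A chain morphism `φ`, defined on the subcomplex `L` of the singular complex `Kc` of
`P` (where `L` contains all `0`-simplexes of `Kc`), is a partial singular realization of
`Kc` in the open cover `𝒰`. -/
def IsPartialSingRealization {G : Type v} [CommRing G] {P : Type w} [TopologicalSpace P]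
    {X : Type u} [TopologicalSpace X] {Kc L : SingSub P} (_hL : L.le Kc)
    (φ : SingChainMap G L X) (𝒰 : Set (Set X)) : Prop :=
  ∀ (k : ℕ) (σ : SSimplex P k), σ ∈ Kc.mem k → ∃ U ∈ 𝒰,
    ∀ (m : ℕ) (τ : SSimplex P m), IsFaceOf τ σ → ∀ hτ : τ ∈ L.mem m,
      SCarrier (φ.val m τ hτ) ⊆ U

instance : Unique (TDelta 0) where
  default := ⟨fun _ => 1, by simp [SimplexCategory.toTopObj]⟩
  uniq a := Subtype.ext <| funext fun i => by
    have ha : ∑ j : Fin 1, a.1 j = 1 := a.2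
    rw [Fin.sum_univ_one] at ha
    obtain rfl : i = 0 := Subsingleton.elim (α := Fin 1) _ _
    exact ha

section SingularChains

variable {G : Type v} [AddCommGroup G] {Y : Type w} [TopologicalSpace Y]

theorem SSimplex.eq_ptSimplex (σ : SSimplex X 0) : σ = ptSimplex (σ default) :=
  ContinuousMap.ext fun t => congrArg σ (Subsingleton.elim t default)

theorem range_subset_sCarrier {k : ℕ} {c : SChain X G k} {σ : SSimplex X k}
    (hσ : σ ∈ c.support) : range σ ⊆ SCarrier c :=
  subset_biUnion_of_mem (u := fun σ : SSimplex X k => range σ) hσ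

theorem sCarrier_mapDomain_subset {k : ℕ} (h : SSimplex X k → SSimplex Y k)
    (c : SChain X G k) : SCarrier (Finsupp.mapDomain h c) ⊆ ⋃ σ ∈ c.support, range (h σ) := by
  classical
  refine iUnion₂_subset fun τ hτ => ?_
  obtain ⟨σ, hσ, rfl⟩ := Finset.mem_image.1 (Finsupp.mapDomain_support hτ)
  exact subset_biUnion_of_mem (u := fun σ => range (h σ)) hσ

theorem sCarrier_pushChain_subset (f : C(X, Y)) {k : ℕ} (c : SChain X G k) :
    SCarrier (pushChain f G k c) ⊆ f '' SCarrier c := by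
  refine (sCarrier_mapDomain_subset _ c).trans (iUnion₂_subset fun σ hσ => ?_)
  rintro _ ⟨t, rfl⟩
  exact mem_image_of_mem f (range_subset_sCarrier hσ (mem_range_self t))

theorem sAug_mapDomain (h : SSimplex X 0 → SSimplex Y 0) (c : SChain X G 0) :
    SAug Y G (Finsupp.mapDomain h c) = SAug X G c := by
  classical
  simp only [SAug, Finsupp.liftAddHom_apply]
  exact Finsupp.sum_mapDomain_index (by simp) (by simp)

theorem pushChain_single (f : C(X, Y)) {k : ℕ} (σ : SSimplex X k) (g : G) :
    pushChain f G k (Finsupp.single σ g) = Finsupp.single (pushSimplex f σ) g :=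
  Finsupp.mapDomain_single

theorem sBoundary_pushChain (f : C(X, Y)) (k : ℕ) (b : SChain X G (k + 1)) :
    SBoundary Y G k (pushChain f G (k + 1) b) = pushChain f G k (SBoundary X G k b) := by
  have : (SBoundary Y G k).comp (pushChain f G (k + 1)) =
      (pushChain f G k).comp (SBoundary X G k) := by
    refine Finsupp.addHom_ext fun σ g => ?_
    simp only [AddMonoidHom.comp_apply, pushChain_single, SBoundary,
      Finsupp.liftAddHom_apply_single, AddMonoidHom.finsetSum_apply, map_sum,
      AddMonoidHom.smul_apply, Finsupp.singleAddHom_apply, map_zsmul]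
    rfl
  exact DFunLike.congr_fun this b

theorem exists_pushChain_eq_of_surjective (f : C(X, Y)) (hf : Function.Surjective f)
    (c : SChain Y G 0) :
    ∃ c' : SChain X G 0, pushChain f G 0 c' = c ∧ SAug X G c' = SAug Y G c ∧
      SCarrier c' ⊆ f ⁻¹' SCarrier c := by
  let lift : SSimplex Y 0 → SSimplex X 0 := fun σ => ptSimplex (Function.surjInv hf (σ default))
  have hpush : pushSimplex f ∘ lift = id := funext fun σ => by
    change ptSimplex (f (Function.surjInv hf (σ default))) = σ
    rw [Function.surjInv_eq hf, ← SSimplex.eq_ptSimplex]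
  refine ⟨Finsupp.mapDomain lift c, ?_, sAug_mapDomain lift c, ?_⟩
  · change Finsupp.mapDomain (pushSimplex f) (Finsupp.mapDomain lift c) = c
    rw [← Finsupp.mapDomain_comp, hpush, Finsupp.mapDomain_id]
  · refine (sCarrier_mapDomain_subset lift c).trans (iUnion₂_subset fun σ hσ => ?_)
    rintro _ ⟨t, rfl⟩
    change f (Function.surjInv hf (σ default)) ∈ SCarrier c
    rw [Function.surjInv_eq hf]
    exact range_subset_sCarrier hσ (mem_range_self _)

theorem HomTrivialPair.zero_of_surjective (f : C(X, Y)) (hf : Function.Surjective f)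
    {V' U' : Set X} {V U : Set Y} (h : HomTrivialPair G V' U' 0) (hV : f ⁻¹' V ⊆ V')
    (hU : MapsTo f U' U) : HomTrivialPair G V U 0 := by
  intro k hk c hcV hc
  obtain rfl : k = 0 := Nat.le_zero.1 hk
  obtain ⟨c', hpush, haug, hc'⟩ := exists_pushChain_eq_of_surjective f hf c
  have hc'cycle : IsCycle X G c' := haug.trans hc
  obtain ⟨b', hb'U', rfl⟩ := h 0 le_rfl c' ((hc'.trans (preimage_mono hcV)).trans hV) hc'cycle
  refine ⟨pushChain f G 1 b', ?_, by rw [sBoundary_pushChain, hpush]⟩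
  exact (sCarrier_pushChain_subset f b').trans ((image_mono hb'U').trans (image_subset_iff.2 hU))

end SingularChains

theorem statement_19_general {G : Type v} [CommRing G] {X : Type u} {Y : Type w}
    [TopologicalSpace X] [TopologicalSpace Y]
    (f : X → Y) (hf : IsUVMap G 0 f) : IsLC G Y 0 := by
  obtain ⟨hcont, hclosed, hsurj, hUV⟩ := hf
  intro y U hU
  have hfU : f ⁻¹' U ∈ nhdsSet (f ⁻¹' {y}) :=
    hclosed.comap_nhds_eq hcont y ▸ Filter.preimage_mem_comap hU
  obtain ⟨V', hV', -, htriv⟩ := hUV y _ hfU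
  obtain ⟨V, hV, hfV⟩ := Filter.mem_comap.1 (hclosed.comap_nhds_le hV')
  refine ⟨V ∩ U, Filter.inter_mem hV hU, inter_subset_right, ?_⟩
  exact htriv.zero_of_surjective ⟨f, hcont⟩ hsurj
    ((preimage_mono inter_subset_left).trans hfV) (mapsTo_preimage f U)

/-- If `f : X → Y` is a closed homologically `UV^0(G)` surjection
between paracompact spaces, then `Y` is `lc^0_G`. -/
theorem statement_19 {G : Type v} [CommRing G] {X : Type u} {Y : Type w}
    [TopologicalSpace X] [TopologicalSpace Y] [ParacompactSpace X] [ParacompactSpace Y]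
    (f : X → Y) (hf : IsUVMap G 0 f) : IsLC G Y 0 :=
  statement_19_general f hf
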